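/- arXiv:math/0504605 — 2 statements merged into one kernel-verified Lean document; each statement's English description precedes it below -/
import Mathlib

section
/- Let G = ⟨a1,...,a_{2g}, f | [a1,f], ..., [a_{2g},f], [a1,a2]···[a_{2g−1},a_{2g}]·f^e⟩ with g ≥ 1 and e = ±1. Then for all integers z1,...,z_{2g}, the tuple (a1 f^{z1},...,a_{2g} f^{z_{2g}}) is Nielsen equivalent to (a1,...,a_{2g}). -/
/-- An elementary Nielsen move on `n`-tuples of elements of a group `G`:
permute the entries, invert one entry, or replace an entry `gᵢ` by
`gᵢ * gⱼ^ε` for some `j ≠ i` and `ε = ±1`. -/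
inductive NielsenMove (G : Type*) [Group G] (n : ℕ) : (Fin n → G) → (Fin n → G) → Prop
  | perm (T : Fin n → G) (σ : Equiv.Perm (Fin n)) : NielsenMove G n T (T ∘ σ)
  | inv (T : Fin n → G) (i : Fin n) : NielsenMove G n T (Function.update T i (T i)⁻¹)
  | mul (T : Fin n → G) (i j : Fin n) (hij : i ≠ j) (ε : ℤ) (hε : ε = 1 ∨ ε = -1) :
      NielsenMove G n T (Function.update T i (T i * T j ^ ε))

/-- Nielsen equivalence: the equivalence relation generated by elementary Nielsen moves. -/
def NielsenEq (G : Type*) [Group G] (n : ℕ) : (Fin n → G) → (Fin n → G) → Prop :=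
  Relation.EqvGen (NielsenMove G n)

open scoped commutatorElement

/-- The product of commutators `[a₁,a₂]⋯[a_{2g-1},a_{2g}]` (taken in order). -/
def surfaceRel {G : Type*} [Group G] (g : ℕ) (a : Fin (2 * g) → G) : G :=
  ((List.finRange g).map (fun i =>
    ⁅a ⟨2 * i.val, by have := i.isLt; omega⟩, a ⟨2 * i.val + 1, by have := i.isLt; omega⟩⁆)).prod

set_option linter.unusedSectionVars false
set_option linter.unusedVariables false
set_option maxHeartbeats 1000000

section NielsenAux
variable {G : Type*} [Group G] {n : ℕ} {g : ℕ}

def pi1 {g : ℕ} (s : Fin g) : Fin (2 * g) := ⟨2 * s.val, by have := s.isLt; omega⟩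
def pi2 {g : ℕ} (s : Fin g) : Fin (2 * g) := ⟨2 * s.val + 1, by have := s.isLt; omega⟩

def cfun (g : ℕ) (a : Fin (2 * g) → G) : Fin g → G := fun s => ⁅a (pi1 s), a (pi2 s)⁆

lemma surfaceRel_eq (a : Fin (2 * g) → G) :
    surfaceRel g a = ((List.finRange g).map (cfun g a)).prod := rfl

def offSet (T : Fin n → G) (i : Fin n) : Set G := {x | ∃ m, m ≠ i ∧ T m = x}

lemma offSet_eq {T T' : Fin n → G} {i : Fin n} (h : ∀ m, m ≠ i → T' m = T m) :
    offSet T' i = offSet T i := by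
  ext x
  constructor <;> rintro ⟨m, hm, rfl⟩ <;> exact ⟨m, hm, by rw [h m hm]⟩

lemma nielsenEq_rightMul (T : Fin n → G) (i : Fin n) (w : G)
    (hw : w ∈ Subgroup.closure (offSet T i)) :
    NielsenEq G n T (Function.update T i (T i * w)) := by
  suffices H : ∀ T' : Fin n → G, (∀ m, m ≠ i → T' m = T m) →
      NielsenEq G n T' (Function.update T' i (T' i * w)) from H T (fun _ _ => rfl)
  induction hw using Subgroup.closure_induction with
  | mem x hx =>
    intro T' hT'
    obtain ⟨m, hmi, hmx⟩ := hx
    have hx' : x = T' m ^ (1 : ℤ) := by rw [hT' m hmi, hmx, zpow_one]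
    rw [hx']
    exact Relation.EqvGen.rel _ _ (NielsenMove.mul T' i m (Ne.symm hmi) 1 (Or.inl rfl))
  | one =>
    intro T' _
    rw [mul_one, Function.update_eq_self]
    exact Relation.EqvGen.refl _
  | mul x y hx hy ihx ihy =>
    intro T' hT'
    have h1 := ihx T' hT'
    set T1 := Function.update T' i (T' i * x) with hT1
    have h2 := ihy T1 (fun m hm => by
      rw [hT1, Function.update_of_ne hm]; exact hT' m hm)
    have h3 : Function.update T1 i (T1 i * y) = Function.update T' i (T' i * (x * y)) := by
      rw [hT1, Function.update_idem, Function.update_self, mul_assoc]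
    rw [h3] at h2
    exact Relation.EqvGen.trans _ _ _ h1 h2
  | inv x hx ihx =>
    intro T' hT'
    set T1 := Function.update T' i (T' i * x⁻¹) with hT1
    have h2 := ihx T1 (fun m hm => by
      rw [hT1, Function.update_of_ne hm]; exact hT' m hm)
    have h3 : Function.update T1 i (T1 i * x) = T' := by
      rw [hT1, Function.update_idem, Function.update_self, mul_assoc,
        inv_mul_cancel, mul_one, Function.update_eq_self]
    rw [h3] at h2
    exact Relation.EqvGen.symm _ _ h2

lemma nielsenEq_leftMul (T : Fin n → G) (i : Fin n) (w : G)
    (hw : w ∈ Subgroup.closure (offSet T i)) :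
    NielsenEq G n T (Function.update T i (w * T i)) := by
  have s1 : NielsenEq G n T (Function.update T i (T i)⁻¹) :=
    Relation.EqvGen.rel _ _ (NielsenMove.inv T i)
  set T1 := Function.update T i (T i)⁻¹ with hT1
  have hset : offSet T1 i = offSet T i := offSet_eq (fun m hm => Function.update_of_ne hm _ _)
  have s2 : NielsenEq G n T1 (Function.update T1 i (T1 i * w⁻¹)) :=
    nielsenEq_rightMul T1 i w⁻¹ (by rw [hset]; exact inv_mem hw)
  set T2 := Function.update T1 i (T1 i * w⁻¹) with hT2
  have s3 : NielsenEq G n T2 (Function.update T2 i (T2 i)⁻¹) :=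
    Relation.EqvGen.rel _ _ (NielsenMove.inv T2 i)
  have h3 : Function.update T2 i (T2 i)⁻¹ = Function.update T i (w * T i) := by
    rw [hT2, hT1, Function.update_idem, Function.update_idem, Function.update_self,
      Function.update_self, mul_inv_rev, inv_inv, inv_inv]
  rw [h3] at s3
  exact Relation.EqvGen.trans _ _ _ (Relation.EqvGen.trans _ _ _ s1 s2) s3

lemma nielsenEq_conjMul (T : Fin n → G) (i : Fin n) (u v : G)
    (hu : u ∈ Subgroup.closure (offSet T i)) (hv : v ∈ Subgroup.closure (offSet T i)) :
    NielsenEq G n T (Function.update T i (u * T i * v)) := by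
  have s1 : NielsenEq G n T (Function.update T i (T i * v)) := nielsenEq_rightMul T i v hv
  set T1 := Function.update T i (T i * v) with hT1
  have hset : offSet T1 i = offSet T i := offSet_eq (fun m hm => Function.update_of_ne hm _ _)
  have s2 : NielsenEq G n T1 (Function.update T1 i (u * T1 i)) :=
    nielsenEq_leftMul T1 i u (by rw [hset]; exact hu)
  have h3 : Function.update T1 i (u * T1 i) = Function.update T i (u * T i * v) := by
    rw [hT1, Function.update_idem, Function.update_self, mul_assoc]
  rw [h3] at s2
  exact Relation.EqvGen.trans _ _ _ s1 s2

lemma nielsenEq_pairSwap (T : Fin n → G) (i j : Fin n) (hij : i ≠ j) :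
    NielsenEq G n T
      (fun m => if m = i then (T j)⁻¹ else if m = j then T j * T i * (T j)⁻¹ else T m) := by
  have hTj : T j ∈ Subgroup.closure (offSet T i) :=
    Subgroup.subset_closure ⟨j, Ne.symm hij, rfl⟩
  have s1 : NielsenEq G n T (Function.update T i (T j * T i * (T j)⁻¹)) :=
    nielsenEq_conjMul T i (T j) (T j)⁻¹ hTj (inv_mem hTj)
  set T1 := Function.update T i (T j * T i * (T j)⁻¹) with hT1
  have s2 : NielsenEq G n T1 (Function.update T1 j (T1 j)⁻¹) :=
    Relation.EqvGen.rel _ _ (NielsenMove.inv T1 j)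
  set T2 := Function.update T1 j (T1 j)⁻¹ with hT2
  have s3 : NielsenEq G n T2 (T2 ∘ Equiv.swap i j) :=
    Relation.EqvGen.rel _ _ (NielsenMove.perm T2 (Equiv.swap i j))
  have h4 : T2 ∘ Equiv.swap i j =
      fun m => if m = i then (T j)⁻¹ else if m = j then T j * T i * (T j)⁻¹ else T m := by
    funext m
    by_cases hmi : m = i
    · subst hmi
      simp only [Function.comp_apply, Equiv.swap_apply_left, if_true, eq_self_iff_true]
      rw [hT2, Function.update_self, hT1, Function.update_of_ne (Ne.symm hij)]
    · by_cases hmj : m = j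
      · subst hmj
        simp only [Function.comp_apply, Equiv.swap_apply_right, if_neg hmi, if_true,
          eq_self_iff_true]
        rw [hT2, Function.update_of_ne hij, hT1, Function.update_self]
      · simp only [Function.comp_apply, Equiv.swap_apply_of_ne_of_ne hmi hmj,
          if_neg hmi, if_neg hmj]
        rw [hT2, Function.update_of_ne hmj, hT1, Function.update_of_ne hmi]
  rw [h4] at s3
  exact Relation.EqvGen.trans _ _ _ (Relation.EqvGen.trans _ _ _ s1 s2) s3

lemma prod_split (c : Fin g → G) (t : Fin g) :
    ((List.finRange g).map c).prod =
      (((List.finRange g).take t.val).map c).prod * c t *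
        (((List.finRange g).drop (t.val + 1)).map c).prod := by
  have ht : t.val < (List.finRange g).length := by simp [t.isLt]
  conv_lhs => rw [← List.take_append_drop t.val (List.finRange g)]
  rw [List.drop_eq_getElem_cons ht, List.map_append, List.map_cons, List.prod_append,
    List.prod_cons, List.getElem_finRange]
  have : Fin.cast (List.length_finRange (n := g)) ⟨t.val, ht⟩ = t := by ext; simp
  rw [this, mul_assoc]

lemma mem_take_finRange {s : Fin g} {t : ℕ} (h : s ∈ (List.finRange g).take t) : s.val < t := by
  obtain ⟨k, hk, hs⟩ := List.mem_iff_getElem.mp h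
  rw [List.getElem_take, List.getElem_finRange] at hs
  have : s.val = k := by rw [← hs]; simp
  rw [this]
  simpa using hk.trans_le (by simp [List.length_take])

lemma mem_drop_finRange {s : Fin g} {t : ℕ} (h : s ∈ (List.finRange g).drop t) : t ≤ s.val := by
  obtain ⟨k, hk, hs⟩ := List.mem_iff_getElem.mp h
  rw [List.getElem_drop, List.getElem_finRange] at hs
  have : s.val = t + k := by rw [← hs]; simp
  omega

lemma comm_helper {x y c d : G} (h1 : Commute c y) (h2 : Commute c d) (h3 : Commute d x) :
    ⁅x * c, y * d⁆ = ⁅x, y⁆ := by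
  have e1 : ∀ a b : G, ⁅a, b⁆ = a * b * (b * a)⁻¹ := fun a b => by
    rw [commutatorElement_def, mul_inv_rev, mul_assoc]
  rw [e1, e1, h1.mul_mul_mul_comm, h3.mul_mul_mul_comm, h2.eq]
  simp [mul_assoc]

lemma commutator_mem {H : Subgroup G} {u v : G} (hu : u ∈ H) (hv : v ∈ H) : ⁅u, v⁆ ∈ H := by
  rw [commutatorElement_def]
  exact mul_mem (mul_mem (mul_mem hu hv) (inv_mem hu)) (inv_mem hv)

lemma conj_helper {p q c d : G} (h1 : Commute c q) (h2 : Commute c d) (h3 : Commute d p) :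
    (p * c) * (q * d) * (p * c)⁻¹ = p * q * p⁻¹ * d := by
  have h := comm_helper h1 h2 h3
  calc (p * c) * (q * d) * (p * c)⁻¹ = ⁅p * c, q * d⁆ * (q * d) := by group
    _ = ⁅p, q⁆ * (q * d) := by rw [h]
    _ = p * q * p⁻¹ * d := by group

lemma step_second (e : ℤ) (a : Fin (2 * g) → G) (f : G)
    (hcomm : ∀ i, Commute (a i) f) (hrel : surfaceRel g a * f ^ e = 1)
    (z : Fin (2 * g) → ℤ) (t : Fin g) :
    NielsenEq G (2 * g) (fun m => a m * f ^ z m)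
      (fun m => a m * f ^ (Function.update z (pi2 t) (z (pi2 t) - e)) m) := by
  set x : Fin (2 * g) → G := fun m => a m * f ^ z m with hxdef
  have hxa : ∀ m, x m = a m * f ^ z m := fun m => rfl
  have hfa : ∀ (p : Fin (2 * g)) (w : ℤ), Commute (f ^ w) (a p) :=
    fun p w => (hcomm p).symm.zpow_left w
  have hcx : ∀ s : Fin g, cfun g x s = cfun g a s := by
    intro s
    show ⁅a (pi1 s) * f ^ z (pi1 s), a (pi2 s) * f ^ z (pi2 s)⁆ = ⁅a (pi1 s), a (pi2 s)⁆
    exact comm_helper (hfa _ _) ((Commute.refl f).zpow_zpow _ _) (hfa _ _)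
  set Aa : G := (((List.finRange g).take t.val).map (cfun g a)).prod with hAadef
  set Ba : G := (((List.finRange g).drop (t.val + 1)).map (cfun g a)).prod with hBadef
  set Ax : G := (((List.finRange g).take t.val).map (cfun g x)).prod with hAxdef
  set Bx : G := (((List.finRange g).drop (t.val + 1)).map (cfun g x)).prod with hBxdef
  have hAx : Ax = Aa := congrArg List.prod (List.map_congr_left (fun s _ => hcx s))
  have hBx : Bx = Ba := congrArg List.prod (List.map_congr_left (fun s _ => hcx s))
  have hC : surfaceRel g a = f ^ (-e) := by
    rw [zpow_neg]; exact eq_inv_of_mul_eq_one_left hrel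
  have hsplit : Aa * cfun g a t * Ba = f ^ (-e) := by
    rw [hAadef, hBadef, ← prod_split (cfun g a) t, ← surfaceRel_eq, hC]
  have hfc : ∀ s : Fin g, Commute f (cfun g a s) := by
    intro s
    have h1 : Commute f (a (pi1 s)) := (hcomm _).symm
    have h2 : Commute f (a (pi2 s)) := (hcomm _).symm
    show Commute f (a (pi1 s) * a (pi2 s) * (a (pi1 s))⁻¹ * (a (pi2 s))⁻¹)
    exact ((h1.mul_right h2).mul_right h1.inv_right).mul_right h2.inv_right
  have hfBa : Commute (f ^ (-e)) Ba := by
    rw [hBadef]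
    exact Commute.zpow_left (Commute.list_prod_right _ _ (fun y hy => by
      obtain ⟨s, _, rfl⟩ := List.mem_map.mp hy; exact hfc s)) (-e)
  have hkey : Ba * (Aa * cfun g a t) = f ^ (-e) := by
    have h5 : Aa * cfun g a t = f ^ (-e) * Ba⁻¹ := by rw [← hsplit]; group
    rw [h5, ← mul_assoc, hfBa.symm.eq, mul_assoc, mul_inv_cancel, mul_one]
  -- the Nielsen move
  set j : Fin (2 * g) := pi2 t with hjdef
  set i : Fin (2 * g) := pi1 t with hidef
  have hij : i ≠ j := Fin.ne_of_val_ne (by simp [hidef, hjdef, pi1, pi2])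
  have hximem : x i ∈ Subgroup.closure (offSet x j) :=
    Subgroup.subset_closure ⟨i, hij, rfl⟩
  have hmemgen : ∀ s : Fin g, s ≠ t → cfun g x s ∈ Subgroup.closure (offSet x j) := by
    intro s hst
    have hp : pi1 s ≠ j := Fin.ne_of_val_ne (by simp [hjdef, pi1, pi2]; omega)
    have hq : pi2 s ≠ j := Fin.ne_of_val_ne (by
      simp only [hjdef, pi1, pi2]
      have : s.val ≠ t.val := fun h => hst (Fin.ext h)
      omega)
    exact commutator_mem (Subgroup.subset_closure ⟨_, hp, rfl⟩)
      (Subgroup.subset_closure ⟨_, hq, rfl⟩)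
  have hmemA : Ax ∈ Subgroup.closure (offSet x j) := by
    rw [hAxdef]
    apply Subgroup.list_prod_mem
    intro y hy
    obtain ⟨s, hs, rfl⟩ := List.mem_map.mp hy
    exact hmemgen s (fun h => by
      have := mem_take_finRange hs; rw [h] at this; omega)
  have hmemB : Bx ∈ Subgroup.closure (offSet x j) := by
    rw [hBxdef]
    apply Subgroup.list_prod_mem
    intro y hy
    obtain ⟨s, hs, rfl⟩ := List.mem_map.mp hy
    exact hmemgen s (fun h => by
      have := mem_drop_finRange hs; rw [h] at this; omega)
  have hmove := nielsenEq_conjMul x j (Bx * Ax * x i) (x i)⁻¹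
    (mul_mem (mul_mem hmemB hmemA) hximem) (inv_mem hximem)
  have hfinal : Function.update x j (Bx * Ax * x i * x j * (x i)⁻¹) =
      (fun m => a m * f ^ (Function.update z j (z j - e)) m) := by
    funext m
    by_cases hm : m = j
    · subst hm
      rw [Function.update_self, Function.update_self]
      have hconj : x i * x j * (x i)⁻¹ = cfun g a t * (a j * f ^ z j) := by
        have h6 : x i * x j * (x i)⁻¹ = ⁅x i, x j⁆ * x j := by group
        have h7 : ⁅x i, x j⁆ = cfun g a t := hcx t
        rw [h6, h7, hxa]
      calc Bx * Ax * x i * x j * (x i)⁻¹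
          = Ba * (Aa * (x i * x j * (x i)⁻¹)) := by
            rw [hAx, hBx]; group
        _ = Ba * (Aa * (cfun g a t * (a j * f ^ z j))) := by rw [hconj]
        _ = (Ba * (Aa * cfun g a t)) * (a j * f ^ z j) := by group
        _ = f ^ (-e) * (a j * f ^ z j) := by rw [hkey]
        _ = a j * (f ^ (-e) * f ^ z j) := by
            rw [← mul_assoc, (hfa j (-e)).eq, mul_assoc]
        _ = a j * f ^ (z j - e) := by rw [← zpow_add, neg_add_eq_sub]
    · rw [Function.update_of_ne hm, Function.update_of_ne hm]
  rw [hfinal] at hmove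
  exact hmove

lemma step_first (e : ℤ) (a : Fin (2 * g) → G) (f : G)
    (hcomm : ∀ i, Commute (a i) f) (hrel : surfaceRel g a * f ^ e = 1)
    (z : Fin (2 * g) → ℤ) (t : Fin g) :
    NielsenEq G (2 * g) (fun m => a m * f ^ z m)
      (fun m => a m * f ^ (Function.update z (pi1 t) (z (pi1 t) - e)) m) := by
  have hfa : ∀ (p : Fin (2 * g)) (w : ℤ), Commute (f ^ w) (a p) :=
    fun p w => (hcomm p).symm.zpow_left w
  set i : Fin (2 * g) := pi1 t with hidef
  set j : Fin (2 * g) := pi2 t with hjdef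
  have hij : i ≠ j := Fin.ne_of_val_ne (by simp [hidef, hjdef, pi1, pi2])
  set a' : Fin (2 * g) → G :=
    fun m => if m = i then (a j)⁻¹ else if m = j then a j * a i * (a j)⁻¹ else a m with ha'
  have himg : ∀ w : Fin (2 * g) → ℤ,
      (fun m => if m = i then ((fun m' => a m' * f ^ w m') j)⁻¹
        else if m = j then (fun m' => a m' * f ^ w m') j * (fun m' => a m' * f ^ w m') i *
          ((fun m' => a m' * f ^ w m') j)⁻¹
        else (fun m' => a m' * f ^ w m') m)
      = (fun m => a' m * f ^ ((fun m' => if m' = i then -(w j) else if m' = j then w i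
          else w m') m)) := by
    intro w
    funext m
    by_cases hmi : m = i
    · subst hmi
      have hxx : (a j * f ^ w j)⁻¹ = (a j)⁻¹ * f ^ (-(w j)) := by
        rw [mul_inv_rev, ← zpow_neg, ((hfa j (-(w j))).inv_right).eq]
      simp only [if_pos rfl, if_true, eq_self_iff_true, ha']
      exact hxx
    · by_cases hmj : m = j
      · subst hmj
        have hyy : (a j * f ^ w j) * (a i * f ^ w i) * (a j * f ^ w j)⁻¹
            = (a j * a i * (a j)⁻¹) * f ^ w i :=
          conj_helper (hfa _ _) ((Commute.refl f).zpow_zpow _ _) (hfa _ _)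
        simp only [if_neg hmi, if_pos rfl, if_true, eq_self_iff_true, ha']
        exact hyy
      · simp only [if_neg hmi, if_neg hmj, ha']
  have hcomm' : ∀ m, Commute (a' m) f := by
    intro m
    rw [ha']
    by_cases hmi : m = i
    · simp only [if_pos hmi]; exact (hcomm j).inv_left
    · by_cases hmj : m = j
      · simp only [if_neg hmi, if_pos hmj]
        exact ((hcomm j).mul_left (hcomm i)).mul_left (hcomm j).inv_left
      · simp only [if_neg hmi, if_neg hmj]; exact hcomm m
  have hrel' : surfaceRel g a' * f ^ e = 1 := by
    have hsr : surfaceRel g a' = surfaceRel g a := by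
      rw [surfaceRel_eq, surfaceRel_eq]
      refine congrArg List.prod (List.map_congr_left (fun s _ => ?_))
      by_cases hst : s = t
      · subst hst
        have hj_i : pi2 s ≠ i := by rw [← hjdef]; exact hij.symm
        have e1 : a' (pi1 s) = (a j)⁻¹ := by
          simp only [ha', if_true]
          rw [if_pos hidef.symm]
        have e2 : a' (pi2 s) = a j * a i * (a j)⁻¹ := by
          simp only [ha', if_true]
          rw [if_neg hj_i, if_pos hjdef.symm]
        show ⁅a' (pi1 s), a' (pi2 s)⁆ = ⁅a (pi1 s), a (pi2 s)⁆
        rw [e1, e2, ← hidef, ← hjdef]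
        group
      · have hvst : s.val ≠ t.val := fun h => hst (Fin.ext h)
        have hs1i : pi1 s ≠ i := Fin.ne_of_val_ne (by
          simp only [hidef, pi1, pi2]; omega)
        have hs1j : pi1 s ≠ j := Fin.ne_of_val_ne (by
          simp only [hjdef, pi1, pi2]; omega)
        have hs2i : pi2 s ≠ i := Fin.ne_of_val_ne (by
          simp only [hidef, pi1, pi2]; omega)
        have hs2j : pi2 s ≠ j := Fin.ne_of_val_ne (by
          simp only [hjdef, pi1, pi2]; omega)
        show ⁅a' (pi1 s), a' (pi2 s)⁆ = ⁅a (pi1 s), a (pi2 s)⁆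
        simp only [ha']
        rw [if_neg hs1i, if_neg hs1j, if_neg hs2i, if_neg hs2j]
    rw [hsr]; exact hrel
  set z' : Fin (2 * g) → ℤ :=
    fun m => if m = i then -(z j) else if m = j then z i else z m with hz'
  have s1 := nielsenEq_pairSwap (fun m => a m * f ^ z m) i j hij
  rw [himg z] at s1
  have s2 := step_second e a' f hcomm' hrel' z' t
  set z0 : Fin (2 * g) → ℤ := Function.update z i (z i - e) with hz0
  have hupd : Function.update z' (pi2 t) (z' (pi2 t) - e)
      = (fun m' => if m' = i then -(z0 j) else if m' = j then z0 i else z0 m') := by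
    funext m
    rw [← hjdef]
    by_cases hmj : m = j
    · subst hmj
      rw [Function.update_self]
      rw [if_neg hij.symm, if_pos rfl]
      simp only [hz', hz0, if_neg hij.symm, if_pos rfl, if_true, Function.update_self]
    · rw [Function.update_of_ne hmj]
      by_cases hmi : m = i
      · subst hmi
        rw [if_pos rfl]
        simp only [hz', hz0, if_pos rfl, Function.update_of_ne hij.symm]
      · rw [if_neg hmi, if_neg hmj]
        simp only [hz', hz0, if_neg hmi, if_neg hmj, Function.update_of_ne hmi]
  rw [hupd] at s2
  have s3 := nielsenEq_pairSwap (fun m => a m * f ^ z0 m) i j hij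
  rw [himg z0] at s3
  have hfin : NielsenEq G (2 * g) (fun m => a m * f ^ z m) (fun m => a m * f ^ z0 m) :=
    Relation.EqvGen.trans _ _ _ (Relation.EqvGen.trans _ _ _ s1 s2)
      (Relation.EqvGen.symm _ _ s3)
  exact hfin

lemma step_any (e : ℤ) (a : Fin (2 * g) → G) (f : G)
    (hcomm : ∀ i, Commute (a i) f) (hrel : surfaceRel g a * f ^ e = 1)
    (z : Fin (2 * g) → ℤ) (k : Fin (2 * g)) :
    NielsenEq G (2 * g) (fun m => a m * f ^ z m)
      (fun m => a m * f ^ (Function.update z k (z k - e)) m) := by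
  have hk := k.isLt
  set t : Fin g := ⟨k.val / 2, by omega⟩ with ht
  by_cases hpar : k.val % 2 = 0
  · have : k = pi1 t := Fin.ext (by simp only [pi1, ht]; omega)
    rw [this]
    exact step_first e a f hcomm hrel z t
  · have : k = pi2 t := Fin.ext (by simp only [pi2, ht]; omega)
    rw [this]
    exact step_second e a f hcomm hrel z t

lemma step_any' (e : ℤ) (a : Fin (2 * g) → G) (f : G)
    (hcomm : ∀ i, Commute (a i) f) (hrel : surfaceRel g a * f ^ e = 1)
    (z : Fin (2 * g) → ℤ) (k : Fin (2 * g)) :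
    NielsenEq G (2 * g) (fun m => a m * f ^ z m)
      (fun m => a m * f ^ (Function.update z k (z k + e)) m) := by
  have h := step_any e a f hcomm hrel (Function.update z k (z k + e)) k
  have h2 : Function.update (Function.update z k (z k + e)) k
      (Function.update z k (z k + e) k - e) = z := by
    funext m
    by_cases hm : m = k
    · subst hm; simp
    · simp [Function.update_of_ne hm]
  rw [h2] at h
  exact Relation.EqvGen.symm _ _ h

lemma reduce (e : ℤ) (he : e = 1 ∨ e = -1) (a : Fin (2 * g) → G) (f : G)
    (hcomm : ∀ i, Commute (a i) f) (hrel : surfaceRel g a * f ^ e = 1) :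
    ∀ (N : ℕ) (z : Fin (2 * g) → ℤ), (∑ m, (z m).natAbs) ≤ N →
      NielsenEq G (2 * g) (fun m => a m * f ^ z m) (fun m => a m * f ^ (0 : ℤ)) := by
  intro N
  induction N with
  | zero =>
    intro z hz
    have : ∀ m, z m = 0 := by
      intro m
      have := Finset.sum_eq_zero_iff.mp (Nat.le_zero.mp hz) m (Finset.mem_univ m)
      omega
    have hzz : z = fun _ => (0 : ℤ) := funext this
    rw [hzz]
    exact Relation.EqvGen.refl _
  | succ N ih =>
    intro z hz
    by_cases hz0 : ∀ m, z m = 0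
    · have hzz : z = fun _ => (0 : ℤ) := funext hz0
      rw [hzz]
      exact Relation.EqvGen.refl _
    · push_neg at hz0
      obtain ⟨k, hk⟩ := hz0
      set d : ℤ := if 0 < z k then 1 else -1 with hd
      have hd1 : d = 1 ∨ d = -1 := by
        by_cases h : 0 < z k
        · left; simp [hd, h]
        · right; simp [hd, h]
      set z1 : Fin (2 * g) → ℤ := Function.update z k (z k - d) with hz1
      have hmove : NielsenEq G (2 * g) (fun m => a m * f ^ z m) (fun m => a m * f ^ z1 m) := by
        by_cases hde : d = e
        · rw [hz1, hde]
          exact step_any e a f hcomm hrel z k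
        · have hd' : d = -e := by omega
          rw [hz1, hd', sub_neg_eq_add]
          exact step_any' e a f hcomm hrel z k
      have habs : (z k - d).natAbs = (z k).natAbs - 1 := by
        by_cases h : 0 < z k
        · have : d = 1 := by simp [hd, h]
          omega
        · have : d = -1 := by simp [hd, h]
          omega
      have hupdabs : (fun m => (z1 m).natAbs)
          = Function.update (fun m => (z m).natAbs) k ((z k - d).natAbs) := by
        funext m
        by_cases hm : m = k
        · subst hm; simp [hz1]
        · simp [hz1, Function.update_of_ne hm]
      have hsum : (∑ m, (z1 m).natAbs) ≤ N := by
        have e1 : (∑ m, (z1 m).natAbs)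
            = (z k - d).natAbs + ∑ m ∈ Finset.univ \ {k}, (z m).natAbs := by
          calc (∑ m, (z1 m).natAbs) = ∑ m, Function.update (fun m => (z m).natAbs) k
                ((z k - d).natAbs) m := by rw [← hupdabs]
            _ = (z k - d).natAbs + ∑ m ∈ Finset.univ \ {k}, (z m).natAbs :=
              Finset.sum_update_of_mem (Finset.mem_univ k) _ _
        have e2 : (∑ m, (z m).natAbs)
            = (z k).natAbs + ∑ m ∈ Finset.univ \ {k}, (z m).natAbs :=
          Finset.sum_eq_add_sum_sdiff_singleton_of_mem (Finset.mem_univ k) _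
        omega
      exact Relation.EqvGen.trans _ _ _ hmove (ih z1 hsum)

end NielsenAux

/-- In the fundamental group of a circle bundle with Euler number `e = ±1`, the tuple
`(a₁ f^{z₁}, …, a_{2g} f^{z_{2g}})` is Nielsen equivalent to `(a₁, …, a_{2g})`. -/
theorem nielsenEq_standard_tuple {G : Type*} [Group G] (g : ℕ) (hg : 1 ≤ g)
    (e : ℤ) (he : e = 1 ∨ e = -1) (a : Fin (2 * g) → G) (f : G)
    (hcomm : ∀ i, Commute (a i) f)
    (hrel : surfaceRel g a * f ^ e = 1)
    (z : Fin (2 * g) → ℤ) :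
    NielsenEq G (2 * g) (fun j => a j * f ^ z j) a := by
  have h := reduce e he a f hcomm hrel (∑ m, (z m).natAbs) z le_rfl
  have h0 : (fun m => a m * f ^ (0 : ℤ)) = a := by funext m; simp
  rw [h0] at h
  exact h
end

section
/- In the group G = ⟨a1,...,a_{2g}, f | f central, [a1,a2]···[a_{2g−1},a_{2g}] = f^{−e}⟩ with e = ±1, for each index i ∈ {1,...,2g} and each η ∈ {−1,1} there exist words w1, w2 in the generators {a_j : j ≠ i} — each a_j appearing exactly once with exponent +1 and once with exponent −1 across w1 and w2 — such that a_i f^η = w1 a_i w2 in G. -/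
open scoped commutatorElement

/-- The element of `G` represented by a word in the letters `b j` and their inverses. -/
def wordProd {G : Type*} [Group G] {k : ℕ} (b : Fin k → G) (w : List (Fin k × Bool)) : G :=
  (w.map (fun p => if p.2 then b p.1 else (b p.1)⁻¹)).prod

/-- The total exponent of the letter `j` in the word `w`. -/
def expSum {k : ℕ} (w : List (Fin k × Bool)) (j : Fin k) : ℤ :=
  (w.map (fun p => if p.1 = j then (if p.2 then (1 : ℤ) else -1) else 0)).sum

namespace ToggleAux

variable {G : Type*} [Group G]

lemma wordProd_append {k : ℕ} (b : Fin k → G) (u v : List (Fin k × Bool)) :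
    wordProd b (u ++ v) = wordProd b u * wordProd b v := by
  simp [wordProd]

/-- Formal inverse of a word. -/
def wordInv {k : ℕ} (w : List (Fin k × Bool)) : List (Fin k × Bool) :=
  (w.reverse).map (fun p => (p.1, !p.2))

lemma wordInv_cons {k : ℕ} (p : Fin k × Bool) (w : List (Fin k × Bool)) :
    wordInv (p :: w) = wordInv w ++ [(p.1, !p.2)] := by simp [wordInv]

lemma wordProd_wordInv {k : ℕ} (b : Fin k → G) (w : List (Fin k × Bool)) :
    wordProd b (wordInv w) = (wordProd b w)⁻¹ := by
  induction w with
  | nil => simp [wordProd, wordInv]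
  | cons p w ih =>
      rcases p with ⟨j, bb⟩
      rw [wordInv_cons, wordProd_append, ih]
      cases bb <;> simp [wordProd]

lemma count_wordInv {k : ℕ} (w : List (Fin k × Bool)) (j : Fin k) (c : Bool) :
    (wordInv w).count (j, c) = w.count (j, !c) := by
  induction w with
  | nil => simp [wordInv]
  | cons p w ih =>
      rcases p with ⟨m, d⟩
      rw [wordInv_cons, List.count_append, ih, List.count_cons]
      cases c <;> cases d <;>
        simp [List.count_cons] <;> by_cases hj : j = m <;> simp [hj, Ne.symm hj]

lemma mem_wordInv {k : ℕ} {w : List (Fin k × Bool)} {p : Fin k × Bool} :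
    p ∈ wordInv w ↔ (p.1, !p.2) ∈ w := by
  unfold wordInv
  constructor
  · intro h
    rcases List.mem_map.1 h with ⟨q, hq, rfl⟩
    simpa using List.mem_reverse.1 hq
  · intro h
    refine List.mem_map.2 ⟨(p.1, !p.2), List.mem_reverse.2 h, ?_⟩
    simp

lemma commute_wordProd {k : ℕ} {b : Fin k → G} {f : G} (h : ∀ i, Commute (b i) f)
    (w : List (Fin k × Bool)) : Commute f (wordProd b w) := by
  induction w with
  | nil => simp [wordProd]
  | cons p w ih =>
      rw [show wordProd b (p :: w) = (if p.2 then b p.1 else (b p.1)⁻¹) * wordProd b w from rfl]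
      refine Commute.mul_right ?_ ih
      rcases p with ⟨j2, c2⟩
      cases c2
      · simpa using ((h j2).symm).inv_right
      · simpa using (h j2).symm


section MoreAux
variable {G : Type*} [Group G]

lemma wordProd_cons {k : ℕ} (b : Fin k → G) (p : Fin k × Bool) (w : List (Fin k × Bool)) :
    wordProd b (p :: w) = (if p.2 then b p.1 else (b p.1)⁻¹) * wordProd b w := by
  simp [wordProd]

/-- The four-letter word spelling the `m`-th commutator block. -/
def blockWord (g : ℕ) (m : Fin g) : List (Fin (2 * g) × Bool) :=
  [(⟨2 * m.1, by have := m.isLt; omega⟩, true), (⟨2 * m.1 + 1, by have := m.isLt; omega⟩, true),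
   (⟨2 * m.1, by have := m.isLt; omega⟩, false), (⟨2 * m.1 + 1, by have := m.isLt; omega⟩, false)]

lemma wordProd_blockWord {g : ℕ} (a : Fin (2 * g) → G) (m : Fin g) :
    wordProd a (blockWord g m) =
      ⁅a ⟨2 * m.1, by have := m.isLt; omega⟩, a ⟨2 * m.1 + 1, by have := m.isLt; omega⟩⁆ := by
  simp [wordProd, blockWord, commutatorElement_def, mul_assoc]

lemma wordProd_flatMap {g : ℕ} (a : Fin (2 * g) → G) (l : List (Fin g)) :
    wordProd a (l.flatMap (blockWord g)) =
      (l.map (fun m => ⁅a ⟨2 * m.1, by have := m.isLt; omega⟩,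
        a ⟨2 * m.1 + 1, by have := m.isLt; omega⟩⁆)).prod := by
  induction l with
  | nil => simp [wordProd]
  | cons m l ih =>
      rw [List.flatMap_cons, wordProd_append, wordProd_blockWord, ih, List.map_cons,
        List.prod_cons]

lemma count_blockWord {g : ℕ} (m : Fin g) (j : Fin (2 * g)) (c : Bool) :
    (blockWord g m).count (j, c) = if j.1 / 2 = m.1 then 1 else 0 := by
  cases c <;>
    simp [blockWord, List.count_cons, Prod.ext_iff, Fin.ext_iff] <;>
    split_ifs <;> omega

lemma count_flatMap_blockWord {g : ℕ} (j : Fin (2 * g)) (c : Bool) (hj : j.1 / 2 < g)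
    (l : List (Fin g)) :
    (l.flatMap (blockWord g)).count (j, c) = l.count ⟨j.1 / 2, hj⟩ := by
  induction l with
  | nil => simp
  | cons m l ih =>
      rw [List.flatMap_cons, List.count_append, count_blockWord, ih, List.count_cons]
      by_cases h : j.1 / 2 = m.1
      · have : (⟨j.1 / 2, hj⟩ : Fin g) = m := Fin.ext h
        simp [h, this]
        omega
      · have : ¬ ((⟨j.1 / 2, hj⟩ : Fin g) = m) := fun hh => h (congrArg Fin.val hh)
        simp [h, this]
        exact fun hh => this hh.symm

lemma mem_flatMap_blockWord {g : ℕ} {l : List (Fin g)} {p : Fin (2 * g) × Bool}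
    (h : p ∈ l.flatMap (blockWord g)) :
    ∃ m ∈ l, p.1.1 = 2 * m.1 ∨ p.1.1 = 2 * m.1 + 1 := by
  rcases List.mem_flatMap.1 h with ⟨m, hm, hp⟩
  refine ⟨m, hm, ?_⟩
  simp only [blockWord, List.mem_cons, List.not_mem_nil, or_false] at hp
  rcases hp with rfl | rfl | rfl | rfl <;> simp

end MoreAux
end ToggleAux

/-- In the circle bundle group with Euler number `e = ±1`, for each generator `aᵢ`
and each `η = ±1` there are words `w₁, w₂` in the remaining generators—each `aⱼ`
(`j ≠ i`) occurring exactly once with exponent `+1` and once with exponent `-1`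
across `w₁` and `w₂`—such that `aᵢ f^η = w₁ aᵢ w₂`. -/
theorem exists_toggle_words {G : Type*} [Group G] (g : ℕ) (hg : 1 ≤ g)
    (e : ℤ) (he : e = 1 ∨ e = -1) (a : Fin (2 * g) → G) (f : G)
    (hcomm : ∀ i, Commute (a i) f)
    (hrel : surfaceRel g a * f ^ e = 1)
    (i : Fin (2 * g)) (η : ℤ) (hη : η = 1 ∨ η = -1) :
    ∃ w₁ w₂ : List (Fin (2 * g) × Bool),
      (∀ p ∈ w₁ ++ w₂, p.1 ≠ i) ∧
      (∀ j, j ≠ i → (w₁ ++ w₂).count (j, true) = 1 ∧ (w₁ ++ w₂).count (j, false) = 1) ∧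
      a i * f ^ η = wordProd a w₁ * a i * wordProd a w₂ := by
  classical
  have hig : i.1 < 2 * g := i.isLt
  set k : ℕ := i.1 / 2 with hk
  have hkg : k < g := by omega
  have hkg' : k < (List.finRange g).length := by simpa using hkg
  set kf : Fin g := ⟨k, hkg⟩ with hkf
  set T1 : List (Fin g) := (List.finRange g).take k with hT1
  set T2 : List (Fin g) := (List.finRange g).drop (k + 1) with hT2
  have hfr : List.finRange g = T1 ++ kf :: T2 := by
    conv_lhs => rw [← List.take_append_drop k (List.finRange g)]
    rw [List.drop_eq_getElem_cons hkg', List.getElem_finRange]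
    rfl
  have hnd := List.nodup_finRange g
  rw [hfr, List.nodup_append] at hnd
  obtain ⟨-, hnd2, hdisj⟩ := hnd
  rw [List.nodup_cons] at hnd2
  have hkT2 : kf ∉ T2 := hnd2.1
  have hkT1 : kf ∉ T1 := fun h => hdisj _ h _ List.mem_cons_self rfl
  set Pw : List (Fin (2 * g) × Bool) := T1.flatMap (ToggleAux.blockWord g) with hPw
  set Qw : List (Fin (2 * g) × Bool) := T2.flatMap (ToggleAux.blockWord g) with hQw
  have hmemPQ : ∀ p : Fin (2 * g) × Bool, (p ∈ Pw ∨ p ∈ Qw) → p.1.1 / 2 ≠ k := by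
    rintro p (hp | hp)
    · obtain ⟨m, hm, hpm⟩ := ToggleAux.mem_flatMap_blockWord hp
      have hmk : m ≠ kf := fun h => hkT1 (h ▸ hm)
      have hmk' : m.1 ≠ k := fun h => hmk (Fin.ext h)
      omega
    · obtain ⟨m, hm, hpm⟩ := ToggleAux.mem_flatMap_blockWord hp
      have hmk : m ≠ kf := fun h => hkT2 (h ▸ hm)
      have hmk' : m.1 ≠ k := fun h => hmk (Fin.ext h)
      omega
  have hne_i : ∀ p : Fin (2 * g) × Bool, (p ∈ Pw ∨ p ∈ Qw) → p.1 ≠ i := by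
    intro p hp hpe
    exact hmemPQ p hp (by rw [hpe])
  have hcntPQ : ∀ (j : Fin (2 * g)) (c : Bool), j.1 / 2 ≠ k →
      Pw.count (j, c) + Qw.count (j, c) = 1 := by
    intro j c hj
    have hjg : j.1 / 2 < g := by have := j.isLt; omega
    rw [hPw, hQw, ToggleAux.count_flatMap_blockWord j c hjg,
      ToggleAux.count_flatMap_blockWord j c hjg]
    have h1 : (List.finRange g).count (⟨j.1 / 2, hjg⟩ : Fin g) = 1 :=
      List.count_eq_one_of_mem (List.nodup_finRange g) (List.mem_finRange _)
    rw [hfr, List.count_append, List.count_cons] at h1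
    have hne : ¬ ((⟨j.1 / 2, hjg⟩ : Fin g) = kf) := fun h => hj (congrArg Fin.val h)
    have hne2 : ¬ (kf = (⟨j.1 / 2, hjg⟩ : Fin g)) := fun h => hne h.symm
    simp only [beq_iff_eq, hne, hne2, if_false] at h1
    omega
  have hcnt0 : ∀ (j : Fin (2 * g)) (c : Bool), j.1 / 2 = k →
      Pw.count (j, c) = 0 ∧ Qw.count (j, c) = 0 := by
    intro j c hj
    have hjg : j.1 / 2 < g := by omega
    rw [hPw, hQw, ToggleAux.count_flatMap_blockWord j c hjg,
      ToggleAux.count_flatMap_blockWord j c hjg]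
    have hjf : (⟨j.1 / 2, hjg⟩ : Fin g) = kf := Fin.ext hj
    rw [hjf]
    exact ⟨List.count_eq_zero.2 hkT1, List.count_eq_zero.2 hkT2⟩
  have hR : surfaceRel g a = (f ^ e)⁻¹ := eq_inv_of_mul_eq_one_left hrel
  have hfcase : f ^ η = surfaceRel g a ∨ f ^ η = (surfaceRel g a)⁻¹ := by
    rcases he with rfl | rfl <;> rcases hη with rfl | rfl
    · right; rw [hR]; simp
    · left; rw [hR]; simp [zpow_neg]
    · left; rw [hR]; simp [zpow_neg]
    · right; rw [hR]; simp [zpow_neg]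
  have hcf : ∀ w : List (Fin (2 * g) × Bool), Commute (f ^ η) (wordProd a w) :=
    fun w => (ToggleAux.commute_wordProd hcomm w).zpow_left η
  have hcfa : ∀ j, Commute (f ^ η) (a j) := fun j => ((hcomm j).symm).zpow_left η
  have h2k : 2 * k < 2 * g := by omega
  have h2k1 : 2 * k + 1 < 2 * g := by omega
  have hsplit : surfaceRel g a =
      wordProd a Pw * ⁅a ⟨2 * k, h2k⟩, a ⟨2 * k + 1, h2k1⟩⁆ * wordProd a Qw := by
    rw [hPw, hQw, ToggleAux.wordProd_flatMap, ToggleAux.wordProd_flatMap]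
    rw [surfaceRel, hfr, List.map_append, List.prod_append, List.map_cons, List.prod_cons]
    rw [← mul_assoc]
  rcases Nat.even_or_odd i.1 with hpar | hpar
  · -- i = 2k
    obtain ⟨t, ht⟩ := hpar
    have hi : i = ⟨2 * k, h2k⟩ := Fin.ext (show i.1 = 2 * k by omega)
    have hj'i : (⟨2 * k + 1, h2k1⟩ : Fin (2 * g)) ≠ i := by
      rw [hi]; intro h
      have hv : (2 * k + 1 : ℕ) = 2 * k := congrArg Fin.val h
      omega
    have hsplit' : surfaceRel g a = wordProd a Pw *
        (a i * a ⟨2 * k + 1, h2k1⟩ * (a i)⁻¹ * (a ⟨2 * k + 1, h2k1⟩)⁻¹) * wordProd a Qw := by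
      rw [hsplit, hi, commutatorElement_def]
    have hj'k : (⟨2 * k + 1, h2k1⟩ : Fin (2 * g)).1 / 2 = k := by simp <;> omega
    rcases hfcase with hf | hf
    · refine ⟨(⟨2 * k + 1, h2k1⟩, false) :: (Qw ++ Pw), [(⟨2 * k + 1, h2k1⟩, true)], ?_, ?_, ?_⟩
      · intro p hp
        simp only [List.cons_append, List.mem_cons, List.mem_append,
          List.mem_singleton, List.not_mem_nil, or_false] at hp
        rcases hp with rfl | (hp | hp) | rfl
        · exact hj'i
        · exact hne_i p (Or.inr hp)
        · exact hne_i p (Or.inl hp)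
        · exact hj'i
      · intro j hji
        by_cases hjj : j = ⟨2 * k + 1, h2k1⟩
        · subst hjj
          have h0Pt := (hcnt0 ⟨2 * k + 1, h2k1⟩ true hj'k).1
          have h0Qt := (hcnt0 ⟨2 * k + 1, h2k1⟩ true hj'k).2
          have h0Pf := (hcnt0 ⟨2 * k + 1, h2k1⟩ false hj'k).1
          have h0Qf := (hcnt0 ⟨2 * k + 1, h2k1⟩ false hj'k).2
          have hb1 : ((⟨2 * k + 1, h2k1⟩, true) : Fin (2 * g) × Bool) ≠ (⟨2 * k + 1, h2k1⟩, false) := by simp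
          have hb2 : ((⟨2 * k + 1, h2k1⟩, false) : Fin (2 * g) × Bool) ≠ (⟨2 * k + 1, h2k1⟩, true) := by simp
          constructor <;>
            · simp only [List.cons_append, List.count_append, ToggleAux.count_wordInv,
                Bool.not_true, Bool.not_false, List.count_cons_of_ne hb1,
                List.count_cons_of_ne hb2, List.count_cons_self, List.count_nil,
                List.count_singleton_self, h0Pt, h0Qt, h0Pf, h0Qf] <;> omega
        · have hjk : j.1 / 2 ≠ k := by
            intro h
            have : j.1 = 2 * k ∨ j.1 = 2 * k + 1 := by omega
            rcases this with h' | h'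
            · exact hji (by rw [hi]; exact Fin.ext h')
            · exact hjj (Fin.ext h')
          have h1t := hcntPQ j true hjk
          have h1f := hcntPQ j false hjk
          have hn1 : ((j, true) : Fin (2 * g) × Bool) ≠ (⟨2 * k + 1, h2k1⟩, true) :=
            fun h => hjj (congrArg Prod.fst h)
          have hn2 : ((j, true) : Fin (2 * g) × Bool) ≠ (⟨2 * k + 1, h2k1⟩, false) :=
            fun h => hjj (congrArg Prod.fst h)
          have hn3 : ((j, false) : Fin (2 * g) × Bool) ≠ (⟨2 * k + 1, h2k1⟩, true) :=
            fun h => hjj (congrArg Prod.fst h)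
          have hn4 : ((j, false) : Fin (2 * g) × Bool) ≠ (⟨2 * k + 1, h2k1⟩, false) :=
            fun h => hjj (congrArg Prod.fst h)
          constructor <;>
            · simp only [List.cons_append, List.count_append, ToggleAux.count_wordInv,
                Bool.not_true, Bool.not_false, List.count_cons_of_ne hn1.symm,
                List.count_cons_of_ne hn2.symm, List.count_cons_of_ne hn3.symm,
                List.count_cons_of_ne hn4.symm, List.count_nil] <;> omega
      · have hw1 : wordProd a ((⟨2 * k + 1, h2k1⟩, false) :: (Qw ++ Pw)) =
            (a ⟨2 * k + 1, h2k1⟩)⁻¹ * (wordProd a Qw * wordProd a Pw) := by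
          rw [ToggleAux.wordProd_cons, ToggleAux.wordProd_append]; simp
        have hw2 : wordProd a [(⟨2 * k + 1, h2k1⟩, true)] = a ⟨2 * k + 1, h2k1⟩ := by
          simp [wordProd]
        rw [hw1, hw2]
        have hU : Commute (f ^ η) (wordProd a Pw * a i * a ⟨2 * k + 1, h2k1⟩) :=
          ((hcf Pw).mul_right (hcfa i)).mul_right (hcfa _)
        have hconj : (wordProd a Pw * a i * a ⟨2 * k + 1, h2k1⟩)⁻¹ * (f ^ η) *
            (wordProd a Pw * a i * a ⟨2 * k + 1, h2k1⟩) = f ^ η := by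
          rw [mul_assoc, hU.eq, ← mul_assoc, inv_mul_cancel, one_mul]
        calc a i * f ^ η
            = a i * ((wordProd a Pw * a i * a ⟨2 * k + 1, h2k1⟩)⁻¹ * (f ^ η) *
              (wordProd a Pw * a i * a ⟨2 * k + 1, h2k1⟩)) := by rw [hconj]
          _ = (a ⟨2 * k + 1, h2k1⟩)⁻¹ * (wordProd a Qw * wordProd a Pw) * a i *
              a ⟨2 * k + 1, h2k1⟩ := by
              rw [hf, hsplit']; group
    · refine ⟨ToggleAux.wordInv Pw ++ ToggleAux.wordInv Qw ++ [(⟨2 * k + 1, h2k1⟩, true)],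
        [(⟨2 * k + 1, h2k1⟩, false)], ?_, ?_, ?_⟩
      · intro p hp
        simp only [List.mem_append, List.mem_singleton, List.mem_cons,
          List.not_mem_nil, or_false] at hp
        rcases hp with ((hp | hp) | rfl) | rfl
        · exact fun h => hne_i (p.1, !p.2) (Or.inl (ToggleAux.mem_wordInv.1 hp)) h
        · exact fun h => hne_i (p.1, !p.2) (Or.inr (ToggleAux.mem_wordInv.1 hp)) h
        · exact hj'i
        · exact hj'i
      · intro j hji
        by_cases hjj : j = ⟨2 * k + 1, h2k1⟩
        · subst hjj
          have h0Pt := (hcnt0 ⟨2 * k + 1, h2k1⟩ true hj'k).1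
          have h0Qt := (hcnt0 ⟨2 * k + 1, h2k1⟩ true hj'k).2
          have h0Pf := (hcnt0 ⟨2 * k + 1, h2k1⟩ false hj'k).1
          have h0Qf := (hcnt0 ⟨2 * k + 1, h2k1⟩ false hj'k).2
          have hb1 : ((⟨2 * k + 1, h2k1⟩, true) : Fin (2 * g) × Bool) ≠ (⟨2 * k + 1, h2k1⟩, false) := by simp
          have hb2 : ((⟨2 * k + 1, h2k1⟩, false) : Fin (2 * g) × Bool) ≠ (⟨2 * k + 1, h2k1⟩, true) := by simp
          constructor <;>
            · simp only [List.cons_append, List.count_append, ToggleAux.count_wordInv,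
                Bool.not_true, Bool.not_false, List.count_cons_of_ne hb1,
                List.count_cons_of_ne hb2, List.count_cons_self, List.count_nil,
                List.count_singleton_self, h0Pt, h0Qt, h0Pf, h0Qf] <;> omega
        · have hjk : j.1 / 2 ≠ k := by
            intro h
            have : j.1 = 2 * k ∨ j.1 = 2 * k + 1 := by omega
            rcases this with h' | h'
            · exact hji (by rw [hi]; exact Fin.ext h')
            · exact hjj (Fin.ext h')
          have h1t := hcntPQ j true hjk
          have h1f := hcntPQ j false hjk
          have hn1 : ((j, true) : Fin (2 * g) × Bool) ≠ (⟨2 * k + 1, h2k1⟩, true) :=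
            fun h => hjj (congrArg Prod.fst h)
          have hn2 : ((j, true) : Fin (2 * g) × Bool) ≠ (⟨2 * k + 1, h2k1⟩, false) :=
            fun h => hjj (congrArg Prod.fst h)
          have hn3 : ((j, false) : Fin (2 * g) × Bool) ≠ (⟨2 * k + 1, h2k1⟩, true) :=
            fun h => hjj (congrArg Prod.fst h)
          have hn4 : ((j, false) : Fin (2 * g) × Bool) ≠ (⟨2 * k + 1, h2k1⟩, false) :=
            fun h => hjj (congrArg Prod.fst h)
          constructor <;>
            · simp only [List.cons_append, List.count_append, ToggleAux.count_wordInv,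
                Bool.not_true, Bool.not_false, List.count_cons_of_ne hn1.symm,
                List.count_cons_of_ne hn2.symm, List.count_cons_of_ne hn3.symm,
                List.count_cons_of_ne hn4.symm, List.count_nil] <;> omega
      · have hw1 : wordProd a (ToggleAux.wordInv Pw ++ ToggleAux.wordInv Qw ++
            [(⟨2 * k + 1, h2k1⟩, true)]) =
            (wordProd a Pw)⁻¹ * (wordProd a Qw)⁻¹ * a ⟨2 * k + 1, h2k1⟩ := by
          rw [ToggleAux.wordProd_append, ToggleAux.wordProd_append,
            ToggleAux.wordProd_wordInv, ToggleAux.wordProd_wordInv]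
          simp [wordProd]
        have hw2 : wordProd a [(⟨2 * k + 1, h2k1⟩, false)] = (a ⟨2 * k + 1, h2k1⟩)⁻¹ := by
          simp [wordProd]
        rw [hw1, hw2]
        have hU : Commute (f ^ η) ((wordProd a Qw)⁻¹ * a ⟨2 * k + 1, h2k1⟩ * a i *
            (a ⟨2 * k + 1, h2k1⟩)⁻¹) :=
          (((hcf Qw).inv_right.mul_right (hcfa _)).mul_right (hcfa i)).mul_right
            (hcfa _).inv_right
        have hconj : ((wordProd a Qw)⁻¹ * a ⟨2 * k + 1, h2k1⟩ * a i *
            (a ⟨2 * k + 1, h2k1⟩)⁻¹)⁻¹ * (f ^ η) *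
            ((wordProd a Qw)⁻¹ * a ⟨2 * k + 1, h2k1⟩ * a i * (a ⟨2 * k + 1, h2k1⟩)⁻¹) =
            f ^ η := by
          rw [mul_assoc, hU.eq, ← mul_assoc, inv_mul_cancel, one_mul]
        calc a i * f ^ η
            = a i * (((wordProd a Qw)⁻¹ * a ⟨2 * k + 1, h2k1⟩ * a i *
              (a ⟨2 * k + 1, h2k1⟩)⁻¹)⁻¹ * (f ^ η) *
              ((wordProd a Qw)⁻¹ * a ⟨2 * k + 1, h2k1⟩ * a i *
              (a ⟨2 * k + 1, h2k1⟩)⁻¹)) := by rw [hconj]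
          _ = (wordProd a Pw)⁻¹ * (wordProd a Qw)⁻¹ * a ⟨2 * k + 1, h2k1⟩ * a i *
              (a ⟨2 * k + 1, h2k1⟩)⁻¹ := by
              rw [hf, hsplit']; group
  · -- i = 2k+1
    obtain ⟨t, ht⟩ := hpar
    have hi : i = ⟨2 * k + 1, h2k1⟩ := Fin.ext (show i.1 = 2 * k + 1 by omega)
    have hj'i : (⟨2 * k, h2k⟩ : Fin (2 * g)) ≠ i := by
      rw [hi]; intro h
      have hv : (2 * k : ℕ) = 2 * k + 1 := congrArg Fin.val h
      omega
    have hsplit' : surfaceRel g a = wordProd a Pw *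
        (a ⟨2 * k, h2k⟩ * a i * (a ⟨2 * k, h2k⟩)⁻¹ * (a i)⁻¹) * wordProd a Qw := by
      rw [hsplit, hi, commutatorElement_def]
    have hj'k : (⟨2 * k, h2k⟩ : Fin (2 * g)).1 / 2 = k := by simp <;> omega
    rcases hfcase with hf | hf
    · refine ⟨Qw ++ Pw ++ [(⟨2 * k, h2k⟩, true)], [(⟨2 * k, h2k⟩, false)], ?_, ?_, ?_⟩
      · intro p hp
        simp only [List.mem_append, List.mem_singleton, List.mem_cons,
          List.not_mem_nil, or_false] at hp
        rcases hp with ((hp | hp) | rfl) | rfl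
        · exact hne_i p (Or.inr hp)
        · exact hne_i p (Or.inl hp)
        · exact hj'i
        · exact hj'i
      · intro j hji
        by_cases hjj : j = ⟨2 * k, h2k⟩
        · subst hjj
          have h0Pt := (hcnt0 ⟨2 * k, h2k⟩ true hj'k).1
          have h0Qt := (hcnt0 ⟨2 * k, h2k⟩ true hj'k).2
          have h0Pf := (hcnt0 ⟨2 * k, h2k⟩ false hj'k).1
          have h0Qf := (hcnt0 ⟨2 * k, h2k⟩ false hj'k).2
          have hb1 : ((⟨2 * k, h2k⟩, true) : Fin (2 * g) × Bool) ≠ (⟨2 * k, h2k⟩, false) := by simp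
          have hb2 : ((⟨2 * k, h2k⟩, false) : Fin (2 * g) × Bool) ≠ (⟨2 * k, h2k⟩, true) := by simp
          constructor <;>
            · simp only [List.cons_append, List.count_append, ToggleAux.count_wordInv,
                Bool.not_true, Bool.not_false, List.count_cons_of_ne hb1,
                List.count_cons_of_ne hb2, List.count_cons_self, List.count_nil,
                List.count_singleton_self, h0Pt, h0Qt, h0Pf, h0Qf] <;> omega
        · have hjk : j.1 / 2 ≠ k := by
            intro h
            have : j.1 = 2 * k ∨ j.1 = 2 * k + 1 := by omega
            rcases this with h' | h'
            · exact hjj (Fin.ext h')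
            · exact hji (by rw [hi]; exact Fin.ext h')
          have h1t := hcntPQ j true hjk
          have h1f := hcntPQ j false hjk
          have hn1 : ((j, true) : Fin (2 * g) × Bool) ≠ (⟨2 * k, h2k⟩, true) :=
            fun h => hjj (congrArg Prod.fst h)
          have hn2 : ((j, true) : Fin (2 * g) × Bool) ≠ (⟨2 * k, h2k⟩, false) :=
            fun h => hjj (congrArg Prod.fst h)
          have hn3 : ((j, false) : Fin (2 * g) × Bool) ≠ (⟨2 * k, h2k⟩, true) :=
            fun h => hjj (congrArg Prod.fst h)
          have hn4 : ((j, false) : Fin (2 * g) × Bool) ≠ (⟨2 * k, h2k⟩, false) :=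
            fun h => hjj (congrArg Prod.fst h)
          constructor <;>
            · simp only [List.cons_append, List.count_append, ToggleAux.count_wordInv,
                Bool.not_true, Bool.not_false, List.count_cons_of_ne hn1.symm,
                List.count_cons_of_ne hn2.symm, List.count_cons_of_ne hn3.symm,
                List.count_cons_of_ne hn4.symm, List.count_nil] <;> omega
      · have hw1 : wordProd a (Qw ++ Pw ++ [(⟨2 * k, h2k⟩, true)]) =
            wordProd a Qw * wordProd a Pw * a ⟨2 * k, h2k⟩ := by
          rw [ToggleAux.wordProd_append, ToggleAux.wordProd_append]
          simp [wordProd]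
        have hw2 : wordProd a [(⟨2 * k, h2k⟩, false)] = (a ⟨2 * k, h2k⟩)⁻¹ := by
          simp [wordProd]
        rw [hw1, hw2]
        have hU : Commute (f ^ η) (wordProd a Pw * a ⟨2 * k, h2k⟩ * a i *
            (a ⟨2 * k, h2k⟩)⁻¹) :=
          (((hcf Pw).mul_right (hcfa _)).mul_right (hcfa i)).mul_right (hcfa _).inv_right
        have hconj : (wordProd a Pw * a ⟨2 * k, h2k⟩ * a i * (a ⟨2 * k, h2k⟩)⁻¹)⁻¹ *
            (f ^ η) * (wordProd a Pw * a ⟨2 * k, h2k⟩ * a i * (a ⟨2 * k, h2k⟩)⁻¹) =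
            f ^ η := by
          rw [mul_assoc, hU.eq, ← mul_assoc, inv_mul_cancel, one_mul]
        calc a i * f ^ η
            = a i * ((wordProd a Pw * a ⟨2 * k, h2k⟩ * a i * (a ⟨2 * k, h2k⟩)⁻¹)⁻¹ *
              (f ^ η) * (wordProd a Pw * a ⟨2 * k, h2k⟩ * a i *
              (a ⟨2 * k, h2k⟩)⁻¹)) := by rw [hconj]
          _ = wordProd a Qw * wordProd a Pw * a ⟨2 * k, h2k⟩ * a i *
              (a ⟨2 * k, h2k⟩)⁻¹ := by
              rw [hf, hsplit']; group
    · refine ⟨(⟨2 * k, h2k⟩, false) :: (ToggleAux.wordInv Pw ++ ToggleAux.wordInv Qw),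
        [(⟨2 * k, h2k⟩, true)], ?_, ?_, ?_⟩
      · intro p hp
        simp only [List.cons_append, List.mem_cons, List.mem_append,
          List.mem_singleton, List.not_mem_nil, or_false] at hp
        rcases hp with rfl | (hp | hp) | rfl
        · exact hj'i
        · exact fun h => hne_i (p.1, !p.2) (Or.inl (ToggleAux.mem_wordInv.1 hp)) h
        · exact fun h => hne_i (p.1, !p.2) (Or.inr (ToggleAux.mem_wordInv.1 hp)) h
        · exact hj'i
      · intro j hji
        by_cases hjj : j = ⟨2 * k, h2k⟩
        · subst hjj
          have h0Pt := (hcnt0 ⟨2 * k, h2k⟩ true hj'k).1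
          have h0Qt := (hcnt0 ⟨2 * k, h2k⟩ true hj'k).2
          have h0Pf := (hcnt0 ⟨2 * k, h2k⟩ false hj'k).1
          have h0Qf := (hcnt0 ⟨2 * k, h2k⟩ false hj'k).2
          have hb1 : ((⟨2 * k, h2k⟩, true) : Fin (2 * g) × Bool) ≠ (⟨2 * k, h2k⟩, false) := by simp
          have hb2 : ((⟨2 * k, h2k⟩, false) : Fin (2 * g) × Bool) ≠ (⟨2 * k, h2k⟩, true) := by simp
          constructor <;>
            · simp only [List.cons_append, List.count_append, ToggleAux.count_wordInv,
                Bool.not_true, Bool.not_false, List.count_cons_of_ne hb1,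
                List.count_cons_of_ne hb2, List.count_cons_self, List.count_nil,
                List.count_singleton_self, h0Pt, h0Qt, h0Pf, h0Qf] <;> omega
        · have hjk : j.1 / 2 ≠ k := by
            intro h
            have : j.1 = 2 * k ∨ j.1 = 2 * k + 1 := by omega
            rcases this with h' | h'
            · exact hjj (Fin.ext h')
            · exact hji (by rw [hi]; exact Fin.ext h')
          have h1t := hcntPQ j true hjk
          have h1f := hcntPQ j false hjk
          have hn1 : ((j, true) : Fin (2 * g) × Bool) ≠ (⟨2 * k, h2k⟩, true) :=
            fun h => hjj (congrArg Prod.fst h)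
          have hn2 : ((j, true) : Fin (2 * g) × Bool) ≠ (⟨2 * k, h2k⟩, false) :=
            fun h => hjj (congrArg Prod.fst h)
          have hn3 : ((j, false) : Fin (2 * g) × Bool) ≠ (⟨2 * k, h2k⟩, true) :=
            fun h => hjj (congrArg Prod.fst h)
          have hn4 : ((j, false) : Fin (2 * g) × Bool) ≠ (⟨2 * k, h2k⟩, false) :=
            fun h => hjj (congrArg Prod.fst h)
          constructor <;>
            · simp only [List.cons_append, List.count_append, ToggleAux.count_wordInv,
                Bool.not_true, Bool.not_false, List.count_cons_of_ne hn1.symm,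
                List.count_cons_of_ne hn2.symm, List.count_cons_of_ne hn3.symm,
                List.count_cons_of_ne hn4.symm, List.count_nil] <;> omega
      · have hw1 : wordProd a ((⟨2 * k, h2k⟩, false) ::
            (ToggleAux.wordInv Pw ++ ToggleAux.wordInv Qw)) =
            (a ⟨2 * k, h2k⟩)⁻¹ * ((wordProd a Pw)⁻¹ * (wordProd a Qw)⁻¹) := by
          rw [ToggleAux.wordProd_cons, ToggleAux.wordProd_append,
            ToggleAux.wordProd_wordInv, ToggleAux.wordProd_wordInv]
          simp
        have hw2 : wordProd a [(⟨2 * k, h2k⟩, true)] = a ⟨2 * k, h2k⟩ := by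
          simp [wordProd]
        rw [hw1, hw2]
        have hU : Commute (f ^ η) ((wordProd a Qw)⁻¹ * a i * a ⟨2 * k, h2k⟩) :=
          ((hcf Qw).inv_right.mul_right (hcfa i)).mul_right (hcfa _)
        have hconj : ((wordProd a Qw)⁻¹ * a i * a ⟨2 * k, h2k⟩)⁻¹ * (f ^ η) *
            ((wordProd a Qw)⁻¹ * a i * a ⟨2 * k, h2k⟩) = f ^ η := by
          rw [mul_assoc, hU.eq, ← mul_assoc, inv_mul_cancel, one_mul]
        calc a i * f ^ η
            = a i * (((wordProd a Qw)⁻¹ * a i * a ⟨2 * k, h2k⟩)⁻¹ * (f ^ η) *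
              ((wordProd a Qw)⁻¹ * a i * a ⟨2 * k, h2k⟩)) := by rw [hconj]
          _ = (a ⟨2 * k, h2k⟩)⁻¹ * ((wordProd a Pw)⁻¹ * (wordProd a Qw)⁻¹) * a i *
              a ⟨2 * k, h2k⟩ := by
              rw [hf, hsplit']; group
end
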